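/- (Diaconis–Graham) For every permutation p of Fin n, inv(p) ≤ Σ_{i} |p(i) − i| ≤ 2 · inv(p), where the sum is over all i ∈ Fin n and |p(i) − i| is the absolute value of the difference of p(i) and i as integers. -/

import Mathlib

/-!
Let `R m` and `L m` count the inversions with left end `m` and with right end `m`. Of the `p m`
positions `j` with `p j < p m`, at most `m` lie left of `m` and the rest give inversions `(m, j)`,
so `p m ≤ m + R m`; symmetrically `m ≤ p m + L m`. Hence `|p m - m| ≤ R m + L m`, and summing over
`m` bounds the displacement by twice the number of inversions. Conversely, the displacement counts
the pairs `(m, t)` with `t` between `m` and `p m`, and the inversions inject into these pairs.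
-/

open Finset

theorem Finset.card_filter_univ_prod {α β : Type*} [Fintype α] [Fintype β] (P : α × β → Prop)
    [DecidablePred P] : #(univ.filter P) = ∑ a, #(univ.filter fun b => P (a, b)) := by
  simp only [card_filter, Fintype.sum_prod_type]

theorem Finset.card_filter_univ_prod_right {α β : Type*} [Fintype α] [Fintype β]
    (P : α × β → Prop) [DecidablePred P] :
    #(univ.filter P) = ∑ b, #(univ.filter fun a => P (a, b)) := by
  simp only [card_filter, Fintype.sum_prod_type_right]

namespace Equiv.Perm

variable {n : ℕ} (p : Perm (Fin n))

def inversions : Finset (Fin n × Fin n) :=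
  univ.filter fun ij => ij.1 < ij.2 ∧ p ij.2 < p ij.1

def displacement : ℤ := ∑ i, |((p i : ℕ) : ℤ) - ((i : ℕ) : ℤ)|

theorem card_filter_apply_lt (m : Fin n) : #(univ.filter fun j => p j < p m) = p m := by
  rw [← Fin.card_Iio (p m)]
  exact card_nbij' p p.symm (fun j hj => by simpa using hj) (fun j hj => by simpa using hj)
    (fun j _ => by simp) (fun j _ => by simp)

theorem apply_le_add_card_inversions_fst (m : Fin n) :
    (p m : ℕ) ≤ m + #(univ.filter fun j => m < j ∧ p j < p m) := by
  calc (p m : ℕ) = #(univ.filter fun j => p j < p m) := (p.card_filter_apply_lt m).symm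
    _ ≤ #(Iio m ∪ univ.filter fun j => m < j ∧ p j < p m) := by
      refine card_le_card fun j hj => ?_
      simp only [mem_filter, mem_univ, true_and, mem_union, mem_Iio] at hj ⊢
      rcases lt_trichotomy j m with h | rfl | h
      · exact .inl h
      · exact absurd hj (lt_irrefl _)
      · exact .inr ⟨h, hj⟩
    _ ≤ m + #(univ.filter fun j => m < j ∧ p j < p m) := by
      rw [← Fin.card_Iio m]; exact card_union_le _ _

theorem le_apply_add_card_inversions_snd (m : Fin n) :
    (m : ℕ) ≤ p m + #(univ.filter fun i => i < m ∧ p m < p i) := by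
  calc (m : ℕ) = #(Iio m) := (Fin.card_Iio m).symm
    _ ≤ #((univ.filter fun j => p j < p m) ∪ univ.filter fun i => i < m ∧ p m < p i) := by
      refine card_le_card fun i hi => ?_
      simp only [mem_filter, mem_univ, true_and, mem_union, mem_Iio] at hi ⊢
      rcases lt_trichotomy (p i) (p m) with h | h | h
      · exact .inl h
      · exact absurd (p.injective h ▸ hi) (lt_irrefl _)
      · exact .inr ⟨hi, h⟩
    _ ≤ p m + #(univ.filter fun i => i < m ∧ p m < p i) := by
      rw [← p.card_filter_apply_lt m]; exact card_union_le _ _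

theorem sum_card_inversions_fst :
    ∑ m, #(univ.filter fun j => m < j ∧ p j < p m) = #p.inversions := by
  rw [inversions, card_filter_univ_prod]

theorem sum_card_inversions_snd :
    ∑ m, #(univ.filter fun i => i < m ∧ p m < p i) = #p.inversions := by
  rw [inversions, card_filter_univ_prod_right]

theorem displacement_le_two_mul_card_inversions : p.displacement ≤ 2 * #p.inversions := by
  have habs (m : Fin n) : |((p m : ℕ) : ℤ) - ((m : ℕ) : ℤ)| ≤
      #(univ.filter fun j => m < j ∧ p j < p m) + #(univ.filter fun i => i < m ∧ p m < p i) := by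
    have := p.apply_le_add_card_inversions_fst m
    have := p.le_apply_add_card_inversions_snd m
    rw [abs_sub_le_iff]; omega
  calc p.displacement ≤ ∑ m, ((#(univ.filter fun j => m < j ∧ p j < p m) : ℤ) +
        #(univ.filter fun i => i < m ∧ p m < p i)) := sum_le_sum fun m _ => habs m
    _ = 2 * #p.inversions := by
      rw [sum_add_distrib, ← Nat.cast_sum, ← Nat.cast_sum, p.sum_card_inversions_fst,
        p.sum_card_inversions_snd]
      ring

def displacementSteps : Finset (Fin n × Fin n) :=
  univ.filter fun mt => min mt.1 (p mt.1) ≤ mt.2 ∧ mt.2 < max mt.1 (p mt.1)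

theorem card_displacementSteps : (#p.displacementSteps : ℤ) = p.displacement := by
  rw [displacementSteps, card_filter_univ_prod, displacement, Nat.cast_sum]
  refine sum_congr rfl fun m _ => ?_
  have hIco : (univ.filter fun t => min m (p m) ≤ t ∧ t < max m (p m)) =
      Ico (min m (p m)) (max m (p m)) := by
    ext t; simp
  simp only [hIco, Fin.card_Ico]
  rcases le_total m (p m) with h | h
  · rw [min_eq_left h, max_eq_right h, abs_of_nonneg (by simpa using h)]; omega
  · rw [min_eq_right h, max_eq_left h, abs_of_nonpos (by simpa using h)]; omega

/-- The pair `(i, j)` is charged to the step `p j` of `i` when `i ≤ p j < p i`, and otherwise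
(then `p j < i < j`) to the step `i` of `j`; the two kinds of steps `(m, t)` satisfy `m ≤ t`
and `t < m` respectively, so no step is charged twice. -/
theorem card_inversions_le_card_displacementSteps : #p.inversions ≤ #p.displacementSteps := by
  refine card_le_card_of_injOn (fun ij => if ij.1 ≤ p ij.2 then (ij.1, p ij.2) else (ij.2, ij.1))
    (fun ⟨i, j⟩ hij => ?_) (fun ⟨i, j⟩ hij ⟨i', j'⟩ hij' heq => ?_)
  · simp only [inversions, mem_coe, mem_filter, mem_univ, true_and] at hij
    simp only [displacementSteps, mem_coe, mem_filter, mem_univ, true_and]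
    split_ifs with h
    · exact ⟨min_le_iff.mpr (.inl h), lt_max_iff.mpr (.inr hij.2)⟩
    · exact ⟨min_le_iff.mpr (.inr (not_le.mp h).le), lt_max_iff.mpr (.inl hij.1)⟩
  · simp only [inversions, mem_coe, mem_filter, mem_univ, true_and] at hij hij'
    dsimp only at heq
    split_ifs at heq with h h' h'
    · simp only [Prod.mk.injEq, EmbeddingLike.apply_eq_iff_eq] at heq
      rw [heq.1, heq.2]
    · simp only [Prod.mk.injEq] at heq
      exact absurd (heq.1 ▸ heq.2 ▸ h) (not_le.mpr hij'.1)
    · simp only [Prod.mk.injEq] at heq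
      exact absurd (heq.1 ▸ heq.2 ▸ h') (not_le.mpr hij.1)
    · simp only [Prod.mk.injEq] at heq
      rw [heq.1, heq.2]

theorem card_inversions_le_displacement : (#p.inversions : ℤ) ≤ p.displacement := by
  rw [← card_displacementSteps]
  exact_mod_cast p.card_inversions_le_card_displacementSteps

end Equiv.Perm

theorem stmt_3 (n : ℕ) (p : Equiv.Perm (Fin n)) :
    ((Finset.univ.filter (fun ij : Fin n × Fin n => ij.1 < ij.2 ∧ p ij.2 < p ij.1)).card : ℤ) ≤
        (∑ i : Fin n, |((p i : ℕ) : ℤ) - ((i : ℕ) : ℤ)|) ∧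
      (∑ i : Fin n, |((p i : ℕ) : ℤ) - ((i : ℕ) : ℤ)|) ≤
        2 * ((Finset.univ.filter
          (fun ij : Fin n × Fin n => ij.1 < ij.2 ∧ p ij.2 < p ij.1)).card : ℤ) :=
  ⟨p.card_inversions_le_displacement, p.displacement_le_two_mul_card_inversions⟩
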